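/- Consider any assignment of decisions d : V → {0,1} to the vertices of the 3^N-subdivided equality negation input graph (N ≥ 0) such that every edge satisfies the equality-negation constraint (equal inputs of the edge's two endpoints iff distinct decisions, where the input of a subdivision vertex is the input of the original endpoint of its color). Then following the closed walk through input edges (W,0)-(B,1), (B,1)-(W,2), (W,2)-(B,2), (B,2)-(W,0), (W,0)-(B,1) yields a contradiction; hence no such assignment exists. -/

import Mathlib

/-!
Along a subdivided edge of odd length the decision flips at every step when the two inputs
agree and never flips otherwise, so the decision at the `W`-endpoint is that at the `B`-endpoint
plus `1` exactly when the inputs agree. On the closed walk `W0 – B1 – W2 – B2 – W0` exactly one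
edge, `{B2, W2}`, has equal inputs, so the decision would change an odd number of times around
a closed walk.
-/

inductive Proc : Type where
  | B | W
deriving DecidableEq

/-- Vertices of the `m`-fold subdivision of the equality-negation input graph:
the original vertices `(p,i)` together with interior vertices of each subdivided
input edge `e = {(B,i),(W,j)}` at positions `0 < k < m`. -/
inductive SubV (m : ℕ) : Type where
  | orig : Proc → Fin 3 → SubV m
  | inner : Fin 3 × Fin 3 → ℕ → SubV m
deriving DecidableEq

/-- The `k`-th vertex (0 ≤ k ≤ m) on the subdivision of the input edge
`e = {(B, e.1), (W, e.2)}`: position `0` is the original `B`-endpoint, position `m`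
the original `W`-endpoint. -/
def pvtx (m : ℕ) (e : Fin 3 × Fin 3) (k : ℕ) : SubV m :=
  if k = 0 then .orig .B e.1 else if k = m then .orig .W e.2 else .inner e k

/-- Colors alternate along each subdivided edge, starting with `B` at position 0. -/
def scolor {m : ℕ} : SubV m → Proc
  | .orig p _ => p
  | .inner _ k => if Even k then .B else .W

/-- A subdivision vertex inherits the input value of the original endpoint of its color. -/
def sinput {m : ℕ} : SubV m → Fin 3
  | .orig _ i => i
  | .inner e k => if Even k then e.1 else e.2

lemma sinput_pvtx {m : ℕ} (hm : Odd m) (e : Fin 3 × Fin 3) {k : ℕ} (hk : k ≤ m) :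
    sinput (pvtx m e k) = if Even k then e.1 else e.2 := by
  unfold pvtx
  rcases eq_or_ne k 0 with rfl | hk0
  · simp [sinput]
  rcases eq_or_ne k m with rfl | hkm
  · simp [hk0, sinput, Nat.not_even_iff_odd.mpr hm]
  · simp [hk0, hkm, sinput]

lemma sinput_pvtx_eq_succ_iff {m : ℕ} (hm : Odd m) (e : Fin 3 × Fin 3) {k : ℕ} (hk : k < m) :
    sinput (pvtx m e k) = sinput (pvtx m e (k + 1)) ↔ e.1 = e.2 := by
  rw [sinput_pvtx hm e hk.le, sinput_pvtx hm e hk]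
  by_cases h : Even k <;> simp [h, Nat.even_add_one, eq_comm]

lemma pvtx_zero (m : ℕ) (e : Fin 3 × Fin 3) : pvtx m e 0 = .orig .B e.1 := by
  simp [pvtx]

lemma pvtx_self {m : ℕ} (hm : m ≠ 0) (e : Fin 3 × Fin 3) : pvtx m e m = .orig .W e.2 := by
  simp [pvtx, hm]

lemma Fin.iff_ne_iff_eq_add_ite {p : Prop} [Decidable p] (a b : Fin 2) :
    (p ↔ a ≠ b) ↔ b = a + if p then 1 else 0 := by
  by_cases hp : p <;> revert a b <;> simp [hp]

lemma Fin.odd_nsmul_eq_self {n : ℕ} (hn : Odd n) (c : Fin 2) : n • c = c := by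
  obtain ⟨t, rfl⟩ := hn
  have h2 : 2 • c = 0 := by revert c; decide
  rw [add_nsmul, mul_nsmul, h2, nsmul_zero, zero_add, one_nsmul]

lemma eq_add_nsmul_of_forall_succ_eq_add {M : Type*} [AddMonoid M] {f : ℕ → M} {c : M} {m : ℕ}
    (h : ∀ k < m, f (k + 1) = f k + c) : f m = f 0 + m • c := by
  induction m with
  | zero => simp
  | succ n ih =>
    rw [h n n.lt_succ_self, ih fun k hk => h k (hk.trans n.lt_succ_self), succ_nsmul, add_assoc]

def IsEqNegAssignment (m : ℕ) (d : SubV m → Fin 2) : Prop :=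
  ∀ e : Fin 3 × Fin 3, ∀ k < m,
    (sinput (pvtx m e k) = sinput (pvtx m e (k + 1)) ↔ d (pvtx m e k) ≠ d (pvtx m e (k + 1)))

lemma IsEqNegAssignment.orig_W {m : ℕ} {d : SubV m → Fin 2} (hd : IsEqNegAssignment m d)
    (hm : Odd m) (e : Fin 3 × Fin 3) :
    d (.orig .W e.2) = d (.orig .B e.1) + if e.1 = e.2 then 1 else 0 := by
  have step : ∀ k < m, d (pvtx m e (k + 1)) = d (pvtx m e k) + if e.1 = e.2 then 1 else 0 :=
    fun k hk => (Fin.iff_ne_iff_eq_add_ite _ _).mp <|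
      (sinput_pvtx_eq_succ_iff hm e hk).symm.trans (hd e k hk)
  rw [← pvtx_zero m e, ← pvtx_self hm.pos.ne' e,
    eq_add_nsmul_of_forall_succ_eq_add (f := fun k => d (pvtx m e k)) step, Fin.odd_nsmul_eq_self hm]

/-- there is no assignment of decisions to the vertices of the 3^N-fold
subdivided equality-negation input graph such that every edge satisfies the
equality-negation constraint (equal inputs of its endpoints iff distinct decisions). -/
theorem eqneg_no_decision_assignment (N : ℕ) :
    ¬ ∃ d : SubV (3 ^ N) → Fin 2,
      ∀ e : Fin 3 × Fin 3, ∀ k < 3 ^ N,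
        (sinput (pvtx (3 ^ N) e k) = sinput (pvtx (3 ^ N) e (k + 1)) ↔
          d (pvtx (3 ^ N) e k) ≠ d (pvtx (3 ^ N) e (k + 1))) := by
  rintro ⟨d, hd⟩
  have hW := IsEqNegAssignment.orig_W hd (Odd.pow (by decide))
  have h10 : d (.orig .W 0) = d (.orig .B 1) := by simpa using hW (1, 0)
  have h12 : d (.orig .W 2) = d (.orig .B 1) := by simpa using hW (1, 2)
  have h22 : d (.orig .W 2) = d (.orig .B 2) + 1 := by simpa using hW (2, 2)
  have h20 : d (.orig .W 0) = d (.orig .B 2) := by simpa using hW (2, 0)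
  have hcycle : d (.orig .B 2) + 1 = d (.orig .B 2) := by rw [← h22, h12, ← h10, h20]
  exact add_ne_left.mpr one_ne_zero hcycle
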